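/- arXiv:math/0607801 — 3 statements merged into one kernel-verified Lean document; each statement's English description precedes it below -/
import Mathlib

section
/- Let d ≥ 1 and λ > 0. Define a(λ) = (1/2)[(1+1/λ)^{1/2} + (1-1/λ)^{1/2}] and b(λ) = (1/2)[(1+1/λ)^{1/2} - (1-1/λ)^{1/2}] for λ ≥ 1. Then the function φ(x) = a(λ)|x| - b(λ)x₁ satisfies the eikonal equation |∇φ(x)|² = 1 + p(x)/λ with p(x) = -x₁/|x|, for all x ∈ ℝ^d \ {0}. -/
/-!
Writing `u = x / ‖x‖`, the gradient of `φ = a‖·‖ - b x₁` at `x ≠ 0` is `a u - b e₁`, so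
`‖∇φ x‖² = a² + b² - 2ab u₁`. Saito's coefficients are chosen so that `a² + b² = 1` and
`2ab = 1/λ`, which turns this into `1 - (x₁/‖x‖)/λ = 1 + p(x)/λ`.
-/

open RealInnerProductSpace

section Gradient

variable {F : Type*} [NormedAddCommGroup F] [InnerProductSpace ℝ F] [CompleteSpace F]
  {f g : F → ℝ} {f' g' x : F}

theorem HasGradientAt.sub (hf : HasGradientAt f f' x) (hg : HasGradientAt g g' x) :
    HasGradientAt (fun y => f y - g y) (f' - g') x := by
  rw [hasGradientAt_iff_hasFDerivAt, map_sub]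
  exact hf.hasFDerivAt.sub hg.hasFDerivAt

theorem HasGradientAt.const_mul (c : ℝ) (hf : HasGradientAt f f' x) :
    HasGradientAt (fun y => c * f y) (c • f') x := by
  rw [hasGradientAt_iff_hasFDerivAt, map_smulₛₗ, conj_trivial]
  exact hf.hasFDerivAt.const_mul c

theorem hasGradientAt_inner_right (e x : F) : HasGradientAt (fun y => ⟪e, y⟫) e x := by
  rw [hasGradientAt_iff_hasFDerivAt]
  exact (InnerProductSpace.toDual ℝ F e).hasFDerivAt

theorem hasGradientAt_norm (hx : x ≠ 0) : HasGradientAt (‖·‖) (‖x‖⁻¹ • x) x := by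
  have hnorm : (‖·‖) = fun y : F => √(‖y‖ ^ 2) :=
    funext fun y => (Real.sqrt_sq (norm_nonneg y)).symm
  have hsq : ‖x‖ ^ 2 ≠ 0 := pow_ne_zero _ (norm_ne_zero_iff.mpr hx)
  rw [hasGradientAt_iff_hasFDerivAt, hnorm]
  refine ((hasStrictFDerivAt_norm_sq x).hasFDerivAt.sqrt hsq).congr_fderiv ?_
  ext y
  rw [Real.sqrt_sq (norm_nonneg x)]
  simp only [smul_apply, coe_innerSL_apply, InnerProductSpace.toDual_apply_apply,
    real_inner_smul_left, nsmul_eq_mul, Nat.cast_ofNat, smul_eq_mul]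
  field_simp

end Gradient

theorem norm_smul_sub_smul_sq {F : Type*} [NormedAddCommGroup F] [InnerProductSpace ℝ F]
    {u e : F} (hu : ‖u‖ = 1) (he : ‖e‖ = 1) (a b : ℝ) :
    ‖a • u - b • e‖ ^ 2 = a ^ 2 + b ^ 2 - 2 * a * b * ⟪u, e⟫ := by
  rw [norm_sub_sq_real, norm_smul, norm_smul, real_inner_smul_left, real_inner_smul_right, hu, he,
    Real.norm_eq_abs, Real.norm_eq_abs, mul_one, mul_one, sq_abs, sq_abs]
  ring

/-- Saito's explicit solution of the eikonal equation `|∇φ|² = 1 + p/λ`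
with `p(x) = -x₁/|x|`, given by `φ(x) = a(λ)|x| - b(λ)x₁`. -/
theorem stmt_0 (d : ℕ) (hd : 1 ≤ d) (lam : ℝ) (hlam : 1 ≤ lam)
    (a b : ℝ)
    (ha : a = (1 / 2) * (Real.sqrt (1 + 1 / lam) + Real.sqrt (1 - 1 / lam)))
    (hb : b = (1 / 2) * (Real.sqrt (1 + 1 / lam) - Real.sqrt (1 - 1 / lam)))
    (φ p : EuclideanSpace ℝ (Fin d) → ℝ)
    (hφ : ∀ x : EuclideanSpace ℝ (Fin d), φ x = a * ‖x‖ - b * x ⟨0, hd⟩)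
    (hp : ∀ x : EuclideanSpace ℝ (Fin d), p x = -(x ⟨0, hd⟩) / ‖x‖) :
    ∀ x : EuclideanSpace ℝ (Fin d), x ≠ 0 →
      ‖gradient φ x‖ ^ 2 = 1 + p x / lam := by
  intro x hx
  set e := EuclideanSpace.single (⟨0, hd⟩ : Fin d) (1 : ℝ)
  have hφe : φ = fun y => a * ‖y‖ - b * ⟪e, y⟫ := by
    ext y
    rw [hφ, EuclideanSpace.inner_single_left, map_one, one_mul]
  have hgrad : HasGradientAt φ (a • (‖x‖⁻¹ • x) - b • e) x :=
    hφe ▸ ((hasGradientAt_norm hx).const_mul a).sub ((hasGradientAt_inner_right e x).const_mul b)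
  have hlam0 : 0 < lam := one_pos.trans_le hlam
  have hs : √(1 + 1 / lam) ^ 2 = 1 + 1 / lam := Real.sq_sqrt (by positivity)
  have ht : √(1 - 1 / lam) ^ 2 = 1 - 1 / lam :=
    Real.sq_sqrt (sub_nonneg.mpr ((div_le_one hlam0).mpr hlam))
  have hab_sq : a ^ 2 + b ^ 2 = 1 := by
    rw [ha, hb]; linear_combination hs / 2 + ht / 2
  have hab_mul : 2 * a * b = 1 / lam := by
    rw [ha, hb]; linear_combination hs / 2 - ht / 2
  rw [hgrad.gradient, norm_smul_sub_smul_sq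
    (by simpa using norm_smul_inv_norm (𝕜 := ℝ) hx) (by simp [e]), hab_sq, hab_mul,
    real_inner_smul_left, EuclideanSpace.inner_single_right, one_mul, conj_trivial, hp]
  ring
end

section
/- Let g_∞ ∈ C²(S^{d-1}, ℝ) satisfy g_∞(ω)² + |∇_ω g_∞(ω)|² = n_∞(ω) for all ω ∈ S^{d-1}, where n_∞ ∈ C¹(S^{d-1}, ℝ). Suppose moreover g_∞ ≥ c > 0 and the operator norm of the Hessian ∇²_ω g_∞ is everywhere at most c/2. Then there exist constants 0 < c₁ ≤ c₂ such that c₁|∇_ω g_∞(ω)| ≤ |∇_ω n_∞(ω)| ≤ c₂|∇_ω g_∞(ω)| for all ω; in particular the critical points of n_∞ and g_∞ on the sphere coincide. -/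
/-!
A function on the sphere is encoded by its `0`-homogeneous extension to `ℝ^d \ {0}`, whose
ambient gradient at a unit vector is the spherical gradient. Since `∇g_∞` is then
`(-1)`-homogeneous, the eikonal equation extends to `n_∞ = g_∞² + |x|² |∇g_∞|²` off the origin.
Differentiating at a unit vector `ω` in a tangent direction `v` gives
`⟨∇n_∞, v⟩ = 2 g_∞ ⟨∇g_∞, v⟩ + 2 ⟨∇g_∞, ∇²g_∞ v⟩`. Both gradients are tangent by Euler's relation,
so `v = ∇g_∞` and the Hessian bound give `⟨∇n_∞, ∇g_∞⟩ ≥ c |∇g_∞|²`, while `v = ∇n_∞` gives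
`|∇n_∞|² ≤ (2 max |g_∞| + c) |∇g_∞| |∇n_∞|`.
-/

open RealInnerProductSpace Filter Topology

section Homogeneous

variable {E : Type*} [NormedAddCommGroup E] [InnerProductSpace ℝ E] [CompleteSpace E]

lemma inner_gradient_self_eq_zero_of_smul_invariant {f : E → ℝ} {x : E}
    (hf : DifferentiableAt ℝ f x) (hhom : ∀ t : ℝ, 0 < t → f (t • x) = f x) :
    ⟪gradient f x, x⟫ = 0 := by
  have hray : HasDerivAt (fun t : ℝ => f (t • x)) (fderiv ℝ f x x) 1 := by
    have hf' : HasFDerivAt f (fderiv ℝ f x) ((1 : ℝ) • x) := by simpa using hf.hasFDerivAt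
    simpa [Function.comp_def] using
      hf'.comp_hasDerivAt (1 : ℝ) ((hasDerivAt_id (1 : ℝ)).smul_const x)
  have hconst : HasDerivAt (fun t : ℝ => f (t • x)) 0 1 :=
    (hasDerivAt_const (1 : ℝ) (f x)).congr_of_eventuallyEq <|
      eventually_of_mem (Ioi_mem_nhds one_pos) fun t ht => hhom t ht
  rw [inner_gradient_left, hray.unique hconst]

lemma gradient_eq_smul_gradient_smul {f : E → ℝ}
    (hhom : ∀ y : E, y ≠ 0 → ∀ t : ℝ, 0 < t → f (t • y) = f y)
    {x : E} (hx : x ≠ 0) {t : ℝ} (ht : 0 < t) :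
    gradient f x = t • gradient f (t • x) := by
  have hloc : (fun y => f (t • y)) =ᶠ[𝓝 x] f :=
    (eventually_ne_nhds hx).mono fun y hy => hhom y hy t ht
  rw [← hloc.gradient_eq, gradient, fderiv_comp_smul, map_smulₛₗ, gradient]
  rfl

lemma ContDiffAt.differentiableAt_gradient {f : E → ℝ} {x : E} (hf : ContDiffAt ℝ 2 f x) :
    DifferentiableAt ℝ (gradient f) x := by
  have hfd : ContDiffAt ℝ 1 (fderiv ℝ f) x := hf.fderiv_right (by norm_num)
  exact ((InnerProductSpace.toDual ℝ E).symm.contDiff.contDiffAt.comp x hfd).differentiableAt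
    one_ne_zero

/-- For `0`-homogeneous `g`, the `0`-homogeneous extension of `g² + |∇_ω g|²` from the unit
sphere. -/
noncomputable def sphericalEikonal (g : E → ℝ) (x : E) : ℝ :=
  g x ^ 2 + ‖x‖ ^ 2 * ‖gradient g x‖ ^ 2

lemma eqOn_sphericalEikonal {g n : E → ℝ}
    (hghom : ∀ x : E, x ≠ 0 → ∀ t : ℝ, 0 < t → g (t • x) = g x)
    (hnhom : ∀ x : E, x ≠ 0 → ∀ t : ℝ, 0 < t → n (t • x) = n x)
    (heik : ∀ ω : E, ‖ω‖ = 1 → g ω ^ 2 + ‖gradient g ω‖ ^ 2 = n ω) :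
    Set.EqOn n (sphericalEikonal g) {x | x ≠ 0} := by
  intro x (hx : x ≠ 0)
  have hr : 0 < ‖x‖⁻¹ := inv_pos.mpr (norm_pos_iff.mpr hx)
  have hω : ‖‖x‖⁻¹ • x‖ = 1 := by
    rw [norm_smul, Real.norm_of_nonneg hr.le, inv_mul_cancel₀ (norm_ne_zero_iff.mpr hx)]
  have hgrad : ‖gradient g (‖x‖⁻¹ • x)‖ = ‖x‖ * ‖gradient g x‖ := by
    rw [gradient_eq_smul_gradient_smul hghom hx hr, norm_smul, Real.norm_of_nonneg hr.le,
      mul_inv_cancel_left₀ (norm_ne_zero_iff.mpr hx)]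
  rw [sphericalEikonal, ← hnhom x hx _ hr, ← heik _ hω, hghom x hx _ hr,
    hgrad, mul_pow]

lemma fderiv_sphericalEikonal_apply {g : E → ℝ} {x : E} (hg : DifferentiableAt ℝ g x)
    (hG : DifferentiableAt ℝ (gradient g) x) (v : E) :
    fderiv ℝ (sphericalEikonal g) x v = 2 * g x * ⟪gradient g x, v⟫
      + 2 * ‖gradient g x‖ ^ 2 * ⟪x, v⟫
      + 2 * ‖x‖ ^ 2 * ⟪gradient g x, fderiv ℝ (gradient g) x v⟫ := by
  have h : HasFDerivAt (sphericalEikonal g) _ x := (hg.hasFDerivAt.pow 2).add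
    ((hasStrictFDerivAt_norm_sq x).hasFDerivAt.mul hG.hasFDerivAt.norm_sq)
  rw [h.fderiv]
  simp only [Nat.add_one_sub_one, pow_one, nsmul_eq_mul, Nat.cast_ofNat,
    add_apply, smul_apply, smul_eq_mul,
    ContinuousLinearMap.comp_apply, coe_innerSL_apply, inner_gradient_left]
  ring

lemma inner_gradient_eq_of_eikonal {g n : E → ℝ}
    (hghom : ∀ x : E, x ≠ 0 → ∀ t : ℝ, 0 < t → g (t • x) = g x)
    (hnhom : ∀ x : E, x ≠ 0 → ∀ t : ℝ, 0 < t → n (t • x) = n x)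
    (hg : ContDiffOn ℝ 2 g {x | x ≠ 0})
    (heik : ∀ ω : E, ‖ω‖ = 1 → g ω ^ 2 + ‖gradient g ω‖ ^ 2 = n ω)
    {ω : E} (hω : ‖ω‖ = 1) {v : E} (hv : ⟪v, ω⟫ = 0) :
    ⟪gradient n ω, v⟫ =
      2 * g ω * ⟪gradient g ω, v⟫ + 2 * ⟪gradient g ω, fderiv ℝ (gradient g) ω v⟫ := by
  have hω₀ : {x : E | x ≠ 0} ∈ 𝓝 ω := isOpen_ne.mem_nhds (norm_ne_zero_iff.mp (hω ▸ one_ne_zero))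
  have hgω : ContDiffAt ℝ 2 g ω := hg.contDiffAt hω₀
  have hn : n =ᶠ[𝓝 ω] sphericalEikonal g :=
    (eqOn_sphericalEikonal hghom hnhom heik).eventuallyEq_of_mem hω₀
  rw [inner_gradient_left, hn.fderiv_eq,
    fderiv_sphericalEikonal_apply (hgω.differentiableAt two_ne_zero) hgω.differentiableAt_gradient,
    hω, real_inner_comm v ω, hv]
  ring

end Homogeneous

section InnerBounds

variable {F : Type*} [NormedAddCommGroup F] [InnerProductSpace ℝ F]

lemma mul_norm_le_norm_of_inner_eq {u w h : F} {a c K : ℝ}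
    (hw : ⟪w, u⟫ = 2 * a * ⟪u, u⟫ + 2 * ⟪u, h⟫) (ha : c ≤ a) (hh : ‖h‖ ≤ K * ‖u‖) :
    2 * (c - K) * ‖u‖ ≤ ‖w‖ := by
  have hsq : 2 * (c - K) * ‖u‖ * ‖u‖ ≤ ‖w‖ * ‖u‖ := by
    have huh : -(K * ‖u‖ * ‖u‖) ≤ ⟪u, h⟫ :=
      calc -(K * ‖u‖ * ‖u‖) = -(‖u‖ * (K * ‖u‖)) := by ring
        _ ≤ -(‖u‖ * ‖h‖) := neg_le_neg (mul_le_mul_of_nonneg_left hh (norm_nonneg u))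
        _ ≤ ⟪u, h⟫ := neg_le_of_abs_le (abs_real_inner_le_norm u h)
    have hcu : c * (‖u‖ * ‖u‖) ≤ a * ⟪u, u⟫ := by
      rw [real_inner_self_eq_norm_mul_norm]
      exact mul_le_mul_of_nonneg_right ha (by positivity)
    calc 2 * (c - K) * ‖u‖ * ‖u‖ ≤ 2 * a * ⟪u, u⟫ + 2 * ⟪u, h⟫ := by linarith
      _ = ⟪w, u⟫ := hw.symm
      _ ≤ ‖w‖ * ‖u‖ := real_inner_le_norm w u
  rcases (norm_nonneg u).eq_or_lt with hu | hu
  · rw [← hu, mul_zero]; exact norm_nonneg w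
  · exact le_of_mul_le_mul_right hsq hu

lemma norm_le_mul_norm_of_inner_eq {u w h : F} {a M K : ℝ}
    (hw : ⟪w, w⟫ = 2 * a * ⟪u, w⟫ + 2 * ⟪u, h⟫) (ha : |a| ≤ M) (hh : ‖h‖ ≤ K * ‖w‖)
    (hK : 0 ≤ K) : ‖w‖ ≤ 2 * (M + K) * ‖u‖ := by
  have hsq : ‖w‖ * ‖w‖ ≤ 2 * (M + K) * ‖u‖ * ‖w‖ := by
    have hauw : a * ⟪u, w⟫ ≤ M * (‖u‖ * ‖w‖) := by
      calc a * ⟪u, w⟫ ≤ |a| * |⟪u, w⟫| := (le_abs_self _).trans (abs_mul _ _).le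
        _ ≤ M * (‖u‖ * ‖w‖) :=
          mul_le_mul ha (abs_real_inner_le_norm u w) (abs_nonneg _) ((abs_nonneg a).trans ha)
    have huh : ⟪u, h⟫ ≤ K * ‖u‖ * ‖w‖ :=
      calc ⟪u, h⟫ ≤ ‖u‖ * ‖h‖ := real_inner_le_norm u h
        _ ≤ ‖u‖ * (K * ‖w‖) := mul_le_mul_of_nonneg_left hh (norm_nonneg u)
        _ = K * ‖u‖ * ‖w‖ := by ring
    calc ‖w‖ * ‖w‖ = ⟪w, w⟫ := (real_inner_self_eq_norm_mul_norm w).symm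
      _ = 2 * a * ⟪u, w⟫ + 2 * ⟪u, h⟫ := hw
      _ ≤ 2 * (M + K) * ‖u‖ * ‖w‖ := by linarith
  rcases (norm_nonneg w).eq_or_lt with hw0 | hw0
  · rw [← hw0]; have := (abs_nonneg a).trans ha; positivity
  · exact le_of_mul_le_mul_right hsq hw0

end InnerBounds

/-- Differentiating the limiting eikonal equation `g_∞² + |∇_ω g_∞|² = n_∞` on the
sphere: if `g_∞ ≥ c > 0` and the (tangential) Hessian of `g_∞` has operator norm at
most `c/2`, then `c₁|∇_ω g_∞| ≤ |∇_ω n_∞| ≤ c₂|∇_ω g_∞|`; in particular the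
critical points of `n_∞` and `g_∞` coincide.  Functions on the sphere are
represented by their `0`-homogeneous extensions to `ℝ^d \ {0}`, so that the
spherical gradient at a unit vector `ω` is the ambient gradient. -/
theorem stmt_11 (d : ℕ) (c : ℝ) (hc : 0 < c)
    (ginf ninf : EuclideanSpace ℝ (Fin d) → ℝ)
    (hghom : ∀ x : EuclideanSpace ℝ (Fin d), x ≠ 0 → ∀ t : ℝ, 0 < t →
      ginf (t • x) = ginf x)
    (hnhom : ∀ x : EuclideanSpace ℝ (Fin d), x ≠ 0 → ∀ t : ℝ, 0 < t →
      ninf (t • x) = ninf x)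
    (hg : ContDiffOn ℝ 2 ginf {x : EuclideanSpace ℝ (Fin d) | x ≠ 0})
    (hn : ContDiffOn ℝ 1 ninf {x : EuclideanSpace ℝ (Fin d) | x ≠ 0})
    (heik : ∀ ω : EuclideanSpace ℝ (Fin d), ‖ω‖ = 1 →
      ginf ω ^ 2 + ‖gradient ginf ω‖ ^ 2 = ninf ω)
    (hlow : ∀ ω : EuclideanSpace ℝ (Fin d), ‖ω‖ = 1 → c ≤ ginf ω)
    (hHess : ∀ ω : EuclideanSpace ℝ (Fin d), ‖ω‖ = 1 →
      ∀ v : EuclideanSpace ℝ (Fin d), (inner ℝ v ω : ℝ) = 0 →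
        ‖fderiv ℝ (gradient ginf) ω v‖ ≤ c / 2 * ‖v‖) :
    ∃ c₁ c₂ : ℝ, 0 < c₁ ∧ c₁ ≤ c₂ ∧
      (∀ ω : EuclideanSpace ℝ (Fin d), ‖ω‖ = 1 →
        c₁ * ‖gradient ginf ω‖ ≤ ‖gradient ninf ω‖ ∧
        ‖gradient ninf ω‖ ≤ c₂ * ‖gradient ginf ω‖) ∧
      (∀ ω : EuclideanSpace ℝ (Fin d), ‖ω‖ = 1 →
        (gradient ninf ω = 0 ↔ gradient ginf ω = 0)) := by
  have hne : ∀ ω : EuclideanSpace ℝ (Fin d), ‖ω‖ = 1 → ω ≠ 0 :=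
    fun ω hω => norm_ne_zero_iff.mp (hω ▸ one_ne_zero)
  obtain ⟨M, hM0, hM⟩ : ∃ M, 0 ≤ M ∧ ∀ ω : EuclideanSpace ℝ (Fin d), ‖ω‖ = 1 → |ginf ω| ≤ M := by
    obtain ⟨M, hM⟩ := (isCompact_sphere (0 : EuclideanSpace ℝ (Fin d)) 1)
      |>.exists_bound_of_continuousOn (hg.continuousOn.mono fun x hx => hne x (by simpa using hx))
    exact ⟨max M 0, le_max_right M 0,
      fun ω hω => (hM ω (by simpa using hω)).trans (le_max_left M 0)⟩
  have hbounds : ∀ ω : EuclideanSpace ℝ (Fin d), ‖ω‖ = 1 →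
      c * ‖gradient ginf ω‖ ≤ ‖gradient ninf ω‖ ∧
      ‖gradient ninf ω‖ ≤ 2 * (M + c / 2) * ‖gradient ginf ω‖ := by
    intro ω hω
    have hω₀ := isOpen_ne.mem_nhds (hne ω hω)
    have hu : ⟪gradient ginf ω, ω⟫ = 0 := inner_gradient_self_eq_zero_of_smul_invariant
      ((hg.differentiableOn two_ne_zero).differentiableAt hω₀) (hghom ω (hne ω hω))
    have hw : ⟪gradient ninf ω, ω⟫ = 0 := inner_gradient_self_eq_zero_of_smul_invariant
      ((hn.differentiableOn one_ne_zero).differentiableAt hω₀) (hnhom ω (hne ω hω))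
    have hgrad := fun v (hv : ⟪v, ω⟫ = 0) ↦ inner_gradient_eq_of_eikonal hghom hnhom hg heik hω hv
    constructor
    · calc c * ‖gradient ginf ω‖ = 2 * (c - c / 2) * ‖gradient ginf ω‖ := by ring
        _ ≤ ‖gradient ninf ω‖ :=
          mul_norm_le_norm_of_inner_eq (hgrad _ hu) (hlow ω hω) (hHess ω hω _ hu)
    · exact norm_le_mul_norm_of_inner_eq (hgrad _ hw) (hM ω hω) (hHess ω hω _ hw) (by positivity)
  refine ⟨c, 2 * (M + c / 2), hc, by linarith, hbounds, fun ω hω => ?_⟩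
  obtain ⟨hlo, hhi⟩ := hbounds ω hω
  rw [← norm_le_zero_iff, ← norm_le_zero_iff]
  constructor <;> intro h0
  · exact le_of_mul_le_mul_left (by linarith : c * ‖gradient ginf ω‖ ≤ c * 0) hc
  · exact hhi.trans (mul_nonpos_of_nonneg_of_nonpos (by positivity) h0)
end

section
/- Let θ : ℝ → ℝ be smooth with θ(x) = 0 for |x| < 1 and θ(x) = 1 for |x| > 2, let 0 < ε < 1, λ > 0, Q_λ(y) = sech(λy/√2), and set u(x,y) = Q_λ(y)θ(x)e^{i√(1+iε)|x|} where √(1+iε) denotes the square root with positive imaginary part. Then u solves Δu + (n_λ + iε)u = f_ε on ℝ², where n_λ(x,y) = λ²Q(λy)² + 1 − λ²/2 with Q(t) = sech(t/√2), and f_ε(x,y) = (2i√(1+iε) sign(x) θ'(x) + θ''(x)) Q_λ(y) e^{i√(1+iε)|x|}. -/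
open Real Filter

private lemma qder {Q : ℝ → ℝ} (hQ : ∀ t, Q t = 1 / Real.cosh (t / Real.sqrt 2)) :
    ∃ D : ℝ → ℝ, (∀ s, HasDerivAt Q (D s) s) ∧
      (∀ s, HasDerivAt D (Q s / 2 - Q s ^ 3) s) := by
  have h2 : (0:ℝ) < Real.sqrt 2 := by positivity
  have hsq : Real.sqrt 2 ^ 2 = 2 := Real.sq_sqrt (by norm_num)
  have hQ' : Q = fun t => (Real.cosh (t / Real.sqrt 2))⁻¹ := funext fun t => by
    rw [hQ, one_div]
  refine ⟨fun s => -(Real.sinh (s / Real.sqrt 2) / Real.sqrt 2) /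
      Real.cosh (s / Real.sqrt 2) ^ 2, fun s => ?_, fun s => ?_⟩
  · have hdiv : HasDerivAt (fun t : ℝ => t / Real.sqrt 2) (1 / Real.sqrt 2) s := by
      simpa using (hasDerivAt_id s).div_const (Real.sqrt 2)
    have hc := hdiv.cosh
    have := hc.inv (Real.cosh_pos (x := s / Real.sqrt 2)).ne'
    rw [hQ']
    refine this.congr_deriv ?_
    ring
  · have hdiv : ∀ t : ℝ, HasDerivAt (fun t : ℝ => t / Real.sqrt 2) (1 / Real.sqrt 2) t := by
      intro t; simpa using (hasDerivAt_id t).div_const (Real.sqrt 2)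
    have hnum : HasDerivAt (fun t : ℝ => -(Real.sinh (t / Real.sqrt 2) / Real.sqrt 2))
        (-(Real.cosh (s / Real.sqrt 2) * (1 / Real.sqrt 2) / Real.sqrt 2)) s :=
      (((hdiv s).sinh).div_const _).neg
    have hden : HasDerivAt (fun t : ℝ => Real.cosh (t / Real.sqrt 2) ^ 2)
        (2 * Real.cosh (s / Real.sqrt 2) ^ 1 * (Real.sinh (s / Real.sqrt 2) * (1 / Real.sqrt 2))) s :=
      ((hdiv s).cosh).pow 2
    have hden0 : Real.cosh (s / Real.sqrt 2) ^ 2 ≠ 0 := by positivity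
    have := hnum.div hden hden0
    refine this.congr_deriv ?_
    symm
    rw [hQ]
    have hch : Real.cosh (s / Real.sqrt 2) ^ 2 - Real.sinh (s / Real.sqrt 2) ^ 2 = 1 :=
      Real.cosh_sq_sub_sinh_sq _
    have hc0 : Real.cosh (s / Real.sqrt 2) ≠ 0 := (Real.cosh_pos _).ne'
    field_simp
    set c := Real.cosh (s / Real.sqrt 2) with hc
    set sh := Real.sinh (s / Real.sqrt 2) with hs2
    set r := Real.sqrt 2 with hr
    linear_combination 4 * hch + (c^2 - 2) * hsq

/-- The explicit wave-guide solution: with `Q(t) = sech(t/√2)`,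
`Q_λ(y) = Q(λy)`, a cutoff `θ` and `z = √(1+iε)` (the root with positive
imaginary part), the function `u(x,y) = Q_λ(y)θ(x)e^{iz|x|}` solves
`Δu + (n_λ + iε)u = f_ε` on `ℝ²`, where `n_λ = λ²Q(λy)² + 1 − λ²/2` and
`f_ε = (2iz·sign(x)θ'(x) + θ''(x)) Q_λ(y) e^{iz|x|}`. -/
theorem stmt_15 (θ : ℝ → ℝ) (hθ : ContDiff ℝ (⊤ : ℕ∞) θ)
    (hθ0 : ∀ x : ℝ, |x| < 1 → θ x = 0) (hθ1 : ∀ x : ℝ, 2 < |x| → θ x = 1)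
    (ε lam : ℝ) (hε : 0 < ε) (hε1 : ε < 1) (hlam : 0 < lam)
    (z : ℂ) (hz : z ^ 2 = 1 + ε * Complex.I) (hzim : 0 < z.im)
    (Q : ℝ → ℝ) (hQ : ∀ t, Q t = 1 / Real.cosh (t / Real.sqrt 2))
    (u : ℝ → ℝ → ℂ)
    (hu : ∀ x y, u x y = (Q (lam * y) : ℝ) * (θ x : ℝ)
      * Complex.exp (Complex.I * z * |x|))
    (nlam : ℝ → ℝ → ℝ)
    (hnlam : ∀ x y, nlam x y = lam ^ 2 * Q (lam * y) ^ 2 + 1 - lam ^ 2 / 2)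
    (fε : ℝ → ℝ → ℂ)
    (hfε : ∀ x y, fε x y = (2 * Complex.I * z * Real.sign x * deriv θ x
      + deriv (deriv θ) x) * (Q (lam * y) : ℝ) * Complex.exp (Complex.I * z * |x|)) :
    ∀ x y : ℝ,
      deriv (deriv fun s => u s y) x + deriv (deriv fun t => u x t) y
        + ((nlam x y : ℝ) + Complex.I * ε) * u x y = fε x y := by
  obtain ⟨D, hQD, hDQ⟩ := qder hQ
  intro x y
  set E : ℝ → ℂ := fun s => Complex.exp (Complex.I * z * |s|) with hE
  set g : ℝ → ℂ := fun s => ((θ s : ℝ) : ℂ) * E s with hgdef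
  set G : ℝ → ℂ := fun s =>
    (((deriv θ s : ℝ) : ℂ) + Complex.I * z * (Real.sign s : ℝ) * ((θ s : ℝ) : ℂ)) * E s with hGdef
  set H : ℝ → ℂ := fun s =>
    (((deriv (deriv θ) s : ℝ) : ℂ) + 2 * Complex.I * z * (Real.sign s : ℝ) * ((deriv θ s : ℝ) : ℂ)
      - z ^ 2 * ((θ s : ℝ) : ℂ)) * E s with hHdef
  have hθdiff : Differentiable ℝ θ := hθ.differentiable (by simp)
  have hθinf : ContDiff ℝ ((⊤ : ℕ∞) : WithTop ℕ∞) θ := hθ.of_le (by simp)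
  have hθ'diff : Differentiable ℝ (deriv θ) :=
    (contDiff_infty_iff_deriv.mp hθinf).2.differentiable (by simp)
  -- near a point with |s| < 1, eventually |t| < 1
  have hob : ∀ s : ℝ, |s| < 1 → ∀ᶠ t in nhds s, |t| < 1 := by
    intro s hs
    have hms : Metric.ball (0 : ℝ) 1 ∈ nhds s := by
      apply Metric.isOpen_ball.mem_nhds
      simp only [mem_ball_zero_iff, Real.norm_eq_abs]
      exact hs
    filter_upwards [hms] with t ht
    simpa [Real.norm_eq_abs] using mem_ball_zero_iff.mp ht
  have hθ0' : ∀ s : ℝ, |s| < 1 → deriv θ s = 0 := by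
    intro s hs
    have h : θ =ᶠ[nhds s] fun _ => (0 : ℝ) := by
      filter_upwards [hob s hs] with t ht using hθ0 t ht
    rw [h.deriv_eq, deriv_const]
  have hθ0'' : ∀ s : ℝ, |s| < 1 → deriv (deriv θ) s = 0 := by
    intro s hs
    have h : deriv θ =ᶠ[nhds s] fun _ => (0 : ℝ) := by
      filter_upwards [hob s hs] with t ht using hθ0' t ht
    rw [h.deriv_eq, deriv_const]
  -- derivative of |·| and local constancy of sign away from 0
  have habs : ∀ w : ℝ, w ≠ 0 → HasDerivAt (fun s : ℝ => |s|) (Real.sign w) w := by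
    intro w hw
    rcases hw.lt_or_gt with h | h
    · rw [Real.sign_of_neg h]; exact hasDerivAt_abs_neg h
    · rw [Real.sign_of_pos h]; exact hasDerivAt_abs_pos h
  have hsgn : ∀ w : ℝ, w ≠ 0 → ∀ᶠ s in nhds w, Real.sign s = Real.sign w := by
    intro w hw
    rcases hw.lt_or_gt with h | h
    · filter_upwards [Iio_mem_nhds h] with s hs
      rw [Real.sign_of_neg hs, Real.sign_of_neg h]
    · filter_upwards [Ioi_mem_nhds h] with s hs
      rw [Real.sign_of_pos hs, Real.sign_of_pos h]
  have hss : ∀ w : ℝ, w ≠ 0 → Real.sign w * Real.sign w = 1 := by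
    intro w hw
    rcases hw.lt_or_gt with h | h
    · rw [Real.sign_of_neg h]; norm_num
    · rw [Real.sign_of_pos h]; norm_num
  have hE' : ∀ w : ℝ, w ≠ 0 →
      HasDerivAt E (Complex.I * z * (Real.sign w : ℝ) * E w) w := by
    intro w hw
    have h1 : HasDerivAt (fun s : ℝ => ((|s| : ℝ) : ℂ)) ((Real.sign w : ℝ) : ℂ) w :=
      (habs w hw).ofReal_comp
    have h2 := h1.const_mul (Complex.I * z)
    have h3 := h2.cexp
    convert h3 using 1
    ring
  have hg' : ∀ w : ℝ, w ≠ 0 → HasDerivAt g (G w) w := by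
    intro w hw
    have := ((hθdiff w).hasDerivAt.ofReal_comp).mul (hE' w hw)
    refine this.congr_deriv ?_
    simp only [hGdef]
    ring
  have hderivg : deriv g = G := by
    funext w
    by_cases hw : w = 0
    · subst hw
      have h : g =ᶠ[nhds (0 : ℝ)] fun _ => (0 : ℂ) := by
        filter_upwards [hob 0 (by norm_num)] with t ht
        simp [hgdef, hθ0 t ht]
      rw [h.deriv_eq, deriv_const]
      simp [hGdef, hθ0 0 (by norm_num), hθ0' 0 (by norm_num), Real.sign_zero]
    · exact (hg' w hw).deriv
  have hderivG : ∀ w : ℝ, deriv G w = H w := by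
    intro w
    by_cases hw : w = 0
    · subst hw
      have h : G =ᶠ[nhds (0 : ℝ)] fun _ => (0 : ℂ) := by
        filter_upwards [hob 0 (by norm_num)] with t ht
        simp [hGdef, hθ0 t ht, hθ0' t ht]
      rw [h.deriv_eq, deriv_const]
      simp [hHdef, hθ0 0 (by norm_num), hθ0' 0 (by norm_num), hθ0'' 0 (by norm_num),
        Real.sign_zero]
    · have hd1 : HasDerivAt (fun s : ℝ => (((deriv θ s : ℝ) : ℂ)
          + Complex.I * z * (Real.sign w : ℝ) * ((θ s : ℝ) : ℂ)) * E s)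
          ((((deriv (deriv θ) w : ℝ) : ℂ)
            + Complex.I * z * (Real.sign w : ℝ) * ((deriv θ w : ℝ) : ℂ)) * E w
           + (((deriv θ w : ℝ) : ℂ) + Complex.I * z * (Real.sign w : ℝ) * ((θ w : ℝ) : ℂ))
             * (Complex.I * z * (Real.sign w : ℝ) * E w)) w := by
        exact (((hθ'diff w).hasDerivAt.ofReal_comp).add
          (((hθdiff w).hasDerivAt.ofReal_comp).const_mul
            (Complex.I * z * (Real.sign w : ℝ)))).mul (hE' w hw)
      have heq : G =ᶠ[nhds w] fun s : ℝ => (((deriv θ s : ℝ) : ℂ)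
          + Complex.I * z * (Real.sign w : ℝ) * ((θ s : ℝ) : ℂ)) * E s := by
        filter_upwards [hsgn w hw] with s hs
        simp only [hGdef, hs]
      have := (hd1.congr_of_eventuallyEq heq).deriv
      rw [this, hHdef]
      have hss' : ((Real.sign w : ℝ) : ℂ) * ((Real.sign w : ℝ) : ℂ) = 1 := by
        rw [← Complex.ofReal_mul, hss w hw, Complex.ofReal_one]
      have hI : (Complex.I) ^ 2 = -1 := Complex.I_sq
      linear_combination (z ^ 2 * ((Real.sign w : ℝ) : ℂ) * ((Real.sign w : ℝ) : ℂ)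
          * ((θ w : ℝ) : ℂ) * E w) * hI
        + (-(z ^ 2 * ((θ w : ℝ) : ℂ) * E w)) * hss'
  -- x derivatives of u
  have hux : (fun s => u s y) = fun s => ((Q (lam * y) : ℝ) : ℂ) * g s := by
    funext s; rw [hu, mul_assoc]
  have h1 : deriv (deriv fun s => u s y) x = ((Q (lam * y) : ℝ) : ℂ) * H x := by
    have e1 : (deriv fun s => u s y) = fun s => ((Q (lam * y) : ℝ) : ℂ) * G s := by
      funext s
      rw [hux, deriv_const_mul_field, hderivg]
    rw [e1, deriv_const_mul_field, hderivG]
  -- y derivatives of u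
  have hlin : ∀ t : ℝ, HasDerivAt (fun t : ℝ => lam * t) lam t := by
    intro t
    simpa using (hasDerivAt_id t).const_mul lam
  set d : ℂ := ((θ x : ℝ) : ℂ) * E x with hd
  have huy : (fun t => u x t) = fun t => ((Q (lam * t) : ℝ) : ℂ) * d := by
    funext t; rw [hu, mul_assoc]
  have hP1 : ∀ t : ℝ, HasDerivAt (fun t : ℝ => ((Q (lam * t) : ℝ) : ℂ) * d)
      (((D (lam * t) * lam : ℝ) : ℂ) * d) t := by
    intro t
    have hr : HasDerivAt (fun t : ℝ => Q (lam * t)) (D (lam * t) * lam) t :=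
      (hQD (lam * t)).comp t (hlin t)
    exact (hr.ofReal_comp).mul_const d
  have hP2 : HasDerivAt (fun t : ℝ => ((D (lam * t) * lam : ℝ) : ℂ) * d)
      ((((Q (lam * y) / 2 - Q (lam * y) ^ 3) * lam * lam : ℝ) : ℂ) * d) y := by
    have hr : HasDerivAt (fun t : ℝ => D (lam * t) * lam)
        ((Q (lam * y) / 2 - Q (lam * y) ^ 3) * lam * lam) y :=
      (((hDQ (lam * y)).comp y (hlin y)).mul_const lam)
    exact (hr.ofReal_comp).mul_const d
  have h2 : deriv (deriv fun t => u x t) y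
      = (((Q (lam * y) / 2 - Q (lam * y) ^ 3) * lam * lam : ℝ) : ℂ) * d := by
    have e1 : (deriv fun t => u x t) = fun t => ((D (lam * t) * lam : ℝ) : ℂ) * d := by
      funext t
      rw [huy]
      exact (hP1 t).deriv
    rw [e1]
    exact hP2.deriv
  rw [h1, h2, hu, hfε, hnlam, hHdef, hd]
  push_cast
  linear_combination (-((θ x : ℝ) : ℂ) * ((Q (lam * y) : ℝ) : ℂ) * E x) * hz
end
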